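/- Let p,q ≥ 1, τ := τ_{p,q}, and let π ∈ S_ann-nc(p,q) be such that every cycle of π is a bridge. Then every cycle of π is of the form (a, τ(a), …, τ^{r−1}(a), b, τ(b), …, τ^{s−1}(b)) for some a ∈ [p], b ∈ [p+1,p+q] and r,s ≥ 1; moreover, if the bridges of π are encountered in a given cyclic order when traversing the cycle (1,…,p) of τ, then they are encountered in the reverse cyclic order when traversing the cycle (p+1,…,p+q). Conversely, every permutation of [p+q] all of whose cycles have this form and which meets the two cycles of τ in mutually reverse cyclic orders belongs to S_ann-nc(p,q). -/

import Mathlib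

namespace AnnNC

/-- The orbit ("same cycle") setoid of a permutation. -/
def orbitSetoid {α : Type*} (σ : Equiv.Perm α) : Setoid α :=
  ⟨σ.SameCycle, ⟨fun x => Equiv.Perm.SameCycle.refl σ x,
    fun h => h.symm, fun h h' => h.trans h'⟩⟩

/-- Number of orbits (cycles, counting fixed points) of a permutation. -/
noncomputable def numOrbits {α : Type*} (σ : Equiv.Perm α) : ℕ :=
  Nat.card (Quotient (orbitSetoid σ))

/-- Number of blocks of the join `Π(σ) ∨ Π(ρ)` of the orbit partitions. -/
noncomputable def numJoin {α : Type*} (σ ρ : Equiv.Perm α) : ℕ :=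
  Nat.card (Quotient (orbitSetoid σ ⊔ orbitSetoid ρ))

/-- Euler characteristic `χ_ρ(π) = #(ρ) + #(π) + #(π⁻¹ρ) − n`. -/
noncomputable def euler {α : Type*} (ρ π : Equiv.Perm α) : ℤ :=
  (numOrbits ρ : ℤ) + (numOrbits π : ℤ) + (numOrbits (π⁻¹ * ρ) : ℤ) - (Nat.card α : ℤ)

/-- `π` is noncrossing on `ρ`. -/
def IsNoncrossingOn {α : Type*} (π ρ : Equiv.Perm α) : Prop :=
  euler ρ π = 2 * (numJoin π ρ : ℤ)

/-- Euler characteristic of permutations regarded as permutations of a subset `S`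
(for permutations fixing the complement of `S` pointwise). -/
noncomputable def eulerOn {α : Type*} (S : Set α) (ρ π : Equiv.Perm α) : ℤ :=
  ((numOrbits ρ : ℤ) - (Nat.card (Sᶜ : Set α) : ℤ)) +
    ((numOrbits π : ℤ) - (Nat.card (Sᶜ : Set α) : ℤ)) +
    ((numOrbits (π⁻¹ * ρ) : ℤ) - (Nat.card (Sᶜ : Set α) : ℤ)) - (Nat.card (S : Set α) : ℤ)

/-- `π` is noncrossing on `ρ`, both regarded as permutations of the subset `S`. -/
def IsNoncrossingWithin {α : Type*} (S : Set α) (π ρ : Equiv.Perm α) : Prop :=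
  eulerOn S ρ π = 2 * ((numJoin π ρ : ℤ) - (Nat.card (Sᶜ : Set α) : ℤ))

/-- `τ_{p,q} = (1,…,p)(p+1,…,p+q)` as a permutation of `Fin (p+q)`. -/
def tauPQ (p q : ℕ) : Equiv.Perm (Fin (p + q)) :=
  Equiv.permCongr finSumFinEquiv (Equiv.sumCongr (finRotate p) (finRotate q))

/-- Disc-noncrossing permutations: noncrossing on `τ_{p,q}` and the orbit partition
refines that of `τ_{p,q}`. -/
def SDiscNC (p q : ℕ) : Set (Equiv.Perm (Fin (p + q))) :=
  {π | IsNoncrossingOn π (tauPQ p q) ∧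
    ∀ x y : Fin (p + q), π.SameCycle x y → ((x : ℕ) < p ↔ (y : ℕ) < p)}

/-- Annular-noncrossing permutations: noncrossing on `τ_{p,q}` with at least one bridge. -/
def SAnnNC (p q : ℕ) : Set (Equiv.Perm (Fin (p + q))) :=
  {π | IsNoncrossingOn π (tauPQ p q) ∧
    ∃ a b : Fin (p + q), π.SameCycle a b ∧ (a : ℕ) < p ∧ p ≤ (b : ℕ)}

/-- The set of elements lying in bridges of `σ`. -/
def BridgeSet (p q : ℕ) (σ : Equiv.Perm (Fin (p + q))) : Set (Fin (p + q)) :=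
  {x | ∃ a b : Fin (p + q), σ.SameCycle x a ∧ σ.SameCycle x b ∧ (a : ℕ) < p ∧ p ≤ (b : ℕ)}

/-- `π₀` is the permutation induced by `π` on the partition `Π(τ_{p,q})`
(the first–return map of `π` to each of the two sides). -/
def IsPiZero (p q : ℕ) (π π₀ : Equiv.Perm (Fin (p + q))) : Prop :=
  ∀ a : Fin (p + q), ∃ k : ℕ, 0 < k ∧ π₀ a = (π ^ k) a ∧
    (((a : ℕ) < p) ↔ (((π ^ k) a : ℕ) < p)) ∧
    ∀ j : ℕ, 0 < j → j < k → ¬ (((a : ℕ) < p) ↔ (((π ^ j) a : ℕ) < p))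

/-- The order `π ⪯ ρ` for (unhatted) permutations: the orbit partition of `π` refines
that of `ρ` and `π` is noncrossing on `ρ`. -/
def permLe {α : Type*} (π ρ : Equiv.Perm α) : Prop :=
  (∀ x y : α, π.SameCycle x y → ρ.SameCycle x y) ∧ IsNoncrossingOn π ρ

/-- The order relation `π ⪯ ρ̂` in `S_nc-sd(p,q)`, i.e. `Kr(ρ) ⪯ Kr(π)`. -/
def leAnnHat (p q : ℕ) (π ρ : Equiv.Perm (Fin (p + q))) : Prop :=
  permLe (ρ⁻¹ * tauPQ p q) (π⁻¹ * tauPQ p q)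

/-- `σ` is the permutation induced by `π` on the subset `J` (first-return map),
extended by the identity off `J`. -/
def IsInducedOn {α : Type*} (π σ : Equiv.Perm α) (J : Set α) : Prop :=
  (∀ a ∉ J, σ a = a) ∧
  ∀ a ∈ J, ∃ k : ℕ, 0 < k ∧ σ a = (π ^ k) a ∧ (π ^ k) a ∈ J ∧
    ∀ j : ℕ, 0 < j → j < k → (π ^ j) a ∉ J

/-- The size of an orbit of a permutation. -/
noncomputable def orbitSize {α : Type*} (σ : Equiv.Perm α) (c : Quotient (orbitSetoid σ)) : ℕ :=
  Nat.card {x : α // Quotient.mk (orbitSetoid σ) x = c}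

/-- `∏_{U ∈ Π(σ)} (−1)^{|U|−1} C_{|U|−1}`. -/
noncomputable def catProd {α : Type*} (σ : Equiv.Perm α) : ℤ :=
  ∏ᶠ c : Quotient (orbitSetoid σ),
    ((-1 : ℤ) ^ (orbitSize σ c - 1) * (catalan (orbitSize σ c - 1) : ℤ))

/-- The carrier of the poset `S_nc-sd(p,q)`: pairs (permutation, hatted?). -/
def NCSDSet (p q : ℕ) : Set (Equiv.Perm (Fin (p + q)) × Bool) :=
  {z | (z.2 = false ∧ (z.1 ∈ SDiscNC p q ∪ SAnnNC p q)) ∨ (z.2 = true ∧ z.1 ∈ SDiscNC p q)}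

/-- The partial order of `S_nc-sd(p,q)`. -/
def ncsdLe (p q : ℕ) (a b : Equiv.Perm (Fin (p + q)) × Bool) : Prop :=
  (a.2 = false ∧ b.2 = false ∧ permLe a.1 b.1) ∨
  (b.2 = true ∧ permLe (b.1⁻¹ * tauPQ p q) (a.1⁻¹ * tauPQ p q))

end AnnNC

/-!
Put `σ = π⁻¹τ` and let `D` be the set of points where `π` and `τ` differ, i.e. the non-fixed
points of `σ`. Since every cycle of `π` is a bridge, `Π(π) ∨ Π(τ)` has a single block and `π` is
noncrossing iff `#(π) + #(σ) = n`.

Every cycle of `π` leaves `[p]` at least once and enters it as often as it leaves it, and at all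
these points `π ≠ τ`; so `2·#(π) ≤ |D|`, with equality iff each cycle has one exit, one entry, and
follows `τ` everywhere else. Every cycle of `σ` is a fixed point or has length at least two; so
`2·#(σ) ≤ n + (n − |D|)`, with equality iff `σ` is an involution. Hence `#(π) + #(σ) ≤ n`, and
when the first equality holds `σ` is an involution iff `σ u = σ⁻¹ u` at every exit `u`. As
`σ u = π⁻¹τ(u)` and `σ⁻¹ u = τ⁻¹π(u)` are both entries, and a cycle has only one, this says that
`τ(u)` and `τ⁻¹π(u)` lie on the same cycle of `π`.
-/

open Equiv Equiv.Perm Finset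

namespace AnnNC

open scoped Classical

section Orbits

variable {α : Type*} [Fintype α]

noncomputable def orbitFinset (σ : Perm α) (x : α) : Finset α := {y | σ.SameCycle x y}

@[simp]
theorem mem_orbitFinset {σ : Perm α} {x y : α} : y ∈ orbitFinset σ x ↔ σ.SameCycle x y := by
  simp [orbitFinset]

theorem orbitFinset_eq {σ : Perm α} {x x' : α} (h : σ.SameCycle x x') :
    orbitFinset σ x = orbitFinset σ x' := by
  ext y
  simp only [mem_orbitFinset]
  exact ⟨h.symm.trans, h.trans⟩

theorem sum_eq_sum_orbits (σ : Perm α) (w : α → ℕ) :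
    ∑ x, w x = ∑ c : Quotient (orbitSetoid σ), ∑ y ∈ orbitFinset σ c.out, w y := by
  rw [← sum_fiberwise univ (Quotient.mk (orbitSetoid σ)) w]
  refine sum_congr rfl fun c _ => sum_congr ?_ fun _ _ => rfl
  ext y
  simp only [mem_filter, mem_univ, true_and, mem_orbitFinset,
    Quotient.mk_eq_iff_out (s := orbitSetoid σ)]
  exact sameCycle_comm

theorem mul_numOrbits_eq_sum_const (σ : Perm α) (k : ℕ) :
    k * numOrbits σ = ∑ _c : Quotient (orbitSetoid σ), k := by
  rw [sum_const, card_univ, smul_eq_mul, numOrbits, Nat.card_eq_fintype_card, mul_comm]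

theorem mul_numOrbits_le_sum (σ : Perm α) {k : ℕ} {w : α → ℕ}
    (hw : ∀ x, k ≤ ∑ y ∈ orbitFinset σ x, w y) : k * numOrbits σ ≤ ∑ x, w x := by
  rw [mul_numOrbits_eq_sum_const, sum_eq_sum_orbits σ]
  exact sum_le_sum fun c _ => hw c.out

theorem mul_numOrbits_eq_sum_iff (σ : Perm α) {k : ℕ} {w : α → ℕ}
    (hw : ∀ x, k ≤ ∑ y ∈ orbitFinset σ x, w y) :
    k * numOrbits σ = ∑ x, w x ↔ ∀ x, ∑ y ∈ orbitFinset σ x, w y = k := by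
  rw [mul_numOrbits_eq_sum_const, sum_eq_sum_orbits σ, sum_eq_sum_iff_of_le fun c _ => hw c.out]
  refine ⟨fun h x => ?_, fun h c _ => (h c.out).symm⟩
  rw [← orbitFinset_eq (Quotient.mk_out (s := orbitSetoid σ) x)]
  exact (h _ (mem_univ _)).symm

theorem pair_subset_orbitFinset (σ : Perm α) (x : α) : {x, σ x} ⊆ orbitFinset σ x := by
  intro y hy
  rcases mem_insert.1 hy with rfl | hy
  · simp [SameCycle.rfl]
  · simp [mem_singleton.1 hy, SameCycle.rfl]

theorem two_le_card_orbitFinset {σ : Perm α} {x : α} (hx : σ x ≠ x) :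
    2 ≤ #(orbitFinset σ x) :=
  card_pair hx.symm ▸ card_le_card (pair_subset_orbitFinset σ x)

theorem card_orbitFinset_eq_two_iff {σ : Perm α} {x : α} (hx : σ x ≠ x) :
    #(orbitFinset σ x) = 2 ↔ σ (σ x) = x := by
  have hpair : #({x, σ x} : Finset α) = 2 := card_pair hx.symm
  constructor
  · intro h
    have heq := eq_of_subset_of_card_le (pair_subset_orbitFinset σ x) (by omega)
    have hmem : σ (σ x) ∈ orbitFinset σ x := by simp [SameCycle.rfl]
    rw [← heq, mem_insert, mem_singleton] at hmem
    exact hmem.resolve_right fun h' => hx (σ.injective h')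
  · intro h2
    refine le_antisymm (hpair ▸ card_le_card fun y hy => ?_) (two_le_card_orbitFinset hx)
    obtain ⟨i, rfl⟩ := (mem_orbitFinset.1 hy).exists_nat_pow_eq
    clear hy
    induction i with
    | zero => simp
    | succ i ih =>
      rw [pow_succ', mul_apply]
      rcases mem_insert.1 ih with h | h
      · simp [h]
      · simp [mem_singleton.1 h, h2]

noncomputable def fixedWeight (σ : Perm α) (x : α) : ℕ := 1 + if σ x = x then 1 else 0

theorem sum_orbitFinset_fixedWeight (σ : Perm α) (x : α) :
    ∑ y ∈ orbitFinset σ x, fixedWeight σ y =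
      if σ x = x then 2 else #(orbitFinset σ x) := by
  split_ifs with hx
  · have : orbitFinset σ x = {x} := by
      ext y
      simp only [mem_orbitFinset, mem_singleton]
      exact ⟨fun h => (h.eq_of_left hx).symm, fun h => h ▸ SameCycle.rfl⟩
    simp [this, hx, fixedWeight]
  · rw [card_eq_sum_ones]
    refine sum_congr rfl fun y hy => ?_
    have hy : ¬ σ y = y := by rwa [← (mem_orbitFinset.1 hy).apply_eq_self_iff]
    simp [hy, fixedWeight]

theorem sum_fixedWeight (σ : Perm α) :
    ∑ x, fixedWeight σ x = Fintype.card α + #{x | σ x = x} := by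
  simp only [fixedWeight]
  rw [sum_add_distrib, sum_boole]
  simp

theorem two_le_sum_orbitFinset_fixedWeight (σ : Perm α) (x : α) :
    2 ≤ ∑ y ∈ orbitFinset σ x, fixedWeight σ y := by
  rw [sum_orbitFinset_fixedWeight]
  split_ifs with hx
  · rfl
  · exact two_le_card_orbitFinset hx

theorem two_mul_numOrbits_le (σ : Perm α) :
    2 * numOrbits σ ≤ Fintype.card α + #{x | σ x = x} :=
  sum_fixedWeight σ ▸ mul_numOrbits_le_sum σ (two_le_sum_orbitFinset_fixedWeight σ)

theorem two_mul_numOrbits_eq_iff (σ : Perm α) :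
    2 * numOrbits σ = Fintype.card α + #{x | σ x = x} ↔ Function.Involutive σ := by
  rw [← sum_fixedWeight, mul_numOrbits_eq_sum_iff σ (two_le_sum_orbitFinset_fixedWeight σ)]
  refine forall_congr' fun x => ?_
  rw [sum_orbitFinset_fixedWeight]
  split_ifs with hx
  · simp [hx]
  · exact card_orbitFinset_eq_two_iff hx

theorem card_filter_orbitFinset_eq_one_iff (σ : Perm α) (P : α → Prop) (x : α) :
    #{y ∈ orbitFinset σ x | P y} = 1 ↔ ∃! u, σ.SameCycle x u ∧ P u := by
  rw [Fintype.existsUnique_iff_card_one, orbitFinset, filter_filter]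

end Orbits

section Crossings

variable {α : Type*} {π τ : Perm α} {ℓ : α → Prop}

def IsExit (π : Perm α) (ℓ : α → Prop) (x : α) : Prop := ℓ x ∧ ¬ ℓ (π x)

def IsEntry (π : Perm α) (ℓ : α → Prop) (x : α) : Prop := ¬ ℓ x ∧ ℓ (π x)

def EveryCycleCrosses (π : Perm α) (ℓ : α → Prop) : Prop :=
  ∀ x, ∃ a b, π.SameCycle x a ∧ π.SameCycle x b ∧ ℓ a ∧ ¬ ℓ b

theorem card_isExit_eq_card_isEntry {s : Finset α} (hs : ∀ y, π y ∈ s ↔ y ∈ s) :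
    #{y ∈ s | IsExit π ℓ y} = #{y ∈ s | IsEntry π ℓ y} := by
  have hshift : ∑ y ∈ s, (if ℓ (π y) then 1 else 0) = ∑ y ∈ s, (if ℓ y then 1 else 0) :=
    sum_nbij' π ⇑π⁻¹ (fun y hy => (hs y).2 hy) (fun y hy => (hs _).1 (by simpa using hy))
      (fun y _ => by simp) (fun y _ => by simp) (fun y _ => rfl)
  have hpt : ∀ y ∈ s, ((if ℓ (π y) then 1 else 0) + if IsExit π ℓ y then 1 else 0) =
      (if ℓ y then 1 else 0) + if IsEntry π ℓ y then 1 else 0 := by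
    intro y _
    by_cases h1 : ℓ y <;> by_cases h2 : ℓ (π y) <;> simp [IsExit, IsEntry, h1, h2]
  have key := sum_congr rfl hpt
  rw [sum_add_distrib, sum_add_distrib, hshift, ← card_filter (IsExit π ℓ),
    ← card_filter (IsEntry π ℓ)] at key
  omega

variable [Fintype α]

theorem iff_of_sameCycle (hτ : ∀ x, ℓ (τ x) ↔ ℓ x) {x y : α} (h : τ.SameCycle x y) :
    ℓ x ↔ ℓ y := by
  obtain ⟨i, rfl⟩ := h.exists_nat_pow_eq
  clear h
  induction i with
  | zero => simp
  | succ i ih => rw [pow_succ', mul_apply, hτ, ih]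

theorem exists_isExit_of_sameCycle {a b : α} (hab : π.SameCycle a b) (ha : ℓ a) (hb : ¬ ℓ b) :
    ∃ u, π.SameCycle a u ∧ IsExit π ℓ u := by
  by_contra! h
  suffices ∀ i : ℕ, ℓ ((π ^ i) a) by
    obtain ⟨i, rfl⟩ := hab.exists_nat_pow_eq
    exact hb (this i)
  intro i
  induction i with
  | zero => simpa
  | succ i ih =>
    rw [pow_succ', mul_apply]
    by_contra hn
    exact h _ SameCycle.rfl.pow_right ⟨ih, hn⟩

theorem card_orbitFinset_ne (hτ : ∀ x, ℓ (τ x) ↔ ℓ x) (x : α) :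
    #{y ∈ orbitFinset π x | π y ≠ τ y} =
      2 * #{y ∈ orbitFinset π x | IsExit π ℓ y} +
        #{y ∈ orbitFinset π x | (ℓ y ↔ ℓ (π y)) ∧ π y ≠ τ y} := by
  have hpt : ∀ y ∈ orbitFinset π x, (if π y ≠ τ y then 1 else 0) =
      (if IsExit π ℓ y then 1 else 0) + (if IsEntry π ℓ y then 1 else 0) +
        if (ℓ y ↔ ℓ (π y)) ∧ π y ≠ τ y then 1 else 0 := by
    intro y _
    have hy := hτ y
    by_cases h1 : ℓ y <;> by_cases h2 : ℓ (π y) <;> by_cases h3 : π y = τ y <;>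
      simp_all [IsExit, IsEntry]
  rw [card_filter, sum_congr rfl hpt, sum_add_distrib, sum_add_distrib, ← card_filter,
    ← card_filter, ← card_filter, ← card_isExit_eq_card_isEntry (by simp)]
  ring

theorem one_le_card_isExit
    (hπ : EveryCycleCrosses π ℓ) (x : α) :
    1 ≤ #{y ∈ orbitFinset π x | IsExit π ℓ y} := by
  obtain ⟨a, b, hxa, hxb, ha, hb⟩ := hπ x
  obtain ⟨u, hau, hu⟩ := exists_isExit_of_sameCycle (hxa.symm.trans hxb) ha hb
  exact card_pos.2 ⟨u, mem_filter.2 ⟨mem_orbitFinset.2 (hxa.trans hau), hu⟩⟩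

theorem two_le_sum_orbitFinset_ite_ne (hτ : ∀ x, ℓ (τ x) ↔ ℓ x)
    (hπ : EveryCycleCrosses π ℓ) (x : α) :
    2 ≤ ∑ y ∈ orbitFinset π x, if π y ≠ τ y then 1 else 0 := by
  rw [← card_filter, card_orbitFinset_ne hτ]
  have := one_le_card_isExit hπ x
  omega

theorem two_mul_numOrbits_le_card_ne (hτ : ∀ x, ℓ (τ x) ↔ ℓ x)
    (hπ : EveryCycleCrosses π ℓ) :
    2 * numOrbits π ≤ #{x | π x ≠ τ x} := by
  rw [card_filter]
  exact mul_numOrbits_le_sum π (two_le_sum_orbitFinset_ite_ne hτ hπ)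

theorem two_mul_numOrbits_eq_card_ne_iff (hτ : ∀ x, ℓ (τ x) ↔ ℓ x)
    (hπ : EveryCycleCrosses π ℓ) :
    2 * numOrbits π = #{x | π x ≠ τ x} ↔
      (∀ x, (ℓ x ↔ ℓ (π x)) → π x = τ x) ∧ ∀ x, ∃! u, π.SameCycle x u ∧ IsExit π ℓ u := by
  rw [card_filter, mul_numOrbits_eq_sum_iff π (two_le_sum_orbitFinset_ite_ne hτ hπ)]
  simp_rw [← card_filter, card_orbitFinset_ne hτ, ← card_filter_orbitFinset_eq_one_iff]
  constructor
  · intro h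
    have hsplit : ∀ x, #{y ∈ orbitFinset π x | IsExit π ℓ y} = 1 ∧
        #{y ∈ orbitFinset π x | (ℓ y ↔ ℓ (π y)) ∧ π y ≠ τ y} = 0 := fun x => by
      have := h x
      have := one_le_card_isExit hπ x
      omega
    refine ⟨fun x hx => ?_, fun x => (hsplit x).1⟩
    by_contra hne
    have h0 := (hsplit x).2
    rw [card_eq_zero, filter_eq_empty_iff] at h0
    exact h0 (mem_orbitFinset.2 SameCycle.rfl) ⟨hx, hne⟩
  · rintro ⟨hA, hB⟩ x
    have h0 : #{y ∈ orbitFinset π x | (ℓ y ↔ ℓ (π y)) ∧ π y ≠ τ y} = 0 :=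
      card_eq_zero.2 (filter_eq_empty_iff.2 fun y _ hy => hy.2 (hA y hy.1))
    rw [hB x, h0]

end Crossings

section Kreweras

variable {α : Type*} {π τ : Perm α} {ℓ : α → Prop}

theorem kreweras_apply_eq_self_iff (x : α) : (π⁻¹ * τ) x = x ↔ π x = τ x := by
  rw [mul_apply, inv_eq_iff_eq, eq_comm]

theorem involutive_kreweras_iff :
    Function.Involutive ⇑(π⁻¹ * τ) ↔ ∀ x, π⁻¹ (τ x) = τ⁻¹ (π x) := by
  refine forall_congr' fun x => ?_
  rw [← eq_inv_iff_eq, mul_inv_rev, inv_inv, mul_apply, mul_apply]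

theorem inv_apply_eq_of_isExit [Fintype α] (hτ : ∀ x, ℓ (τ x) ↔ ℓ x)
    (hA : ∀ x, (ℓ x ↔ ℓ (π x)) → π x = τ x) (hB : ∀ x, ∃! u, π.SameCycle x u ∧ IsExit π ℓ u)
    {u : α} (hu : IsExit π ℓ u) (hC : π.SameCycle (τ u) (τ⁻¹ (π u))) :
    π⁻¹ (τ u) = τ⁻¹ (π u) := by
  have hentry : ∀ x, ∃! w, π.SameCycle x w ∧ IsEntry π ℓ w := fun x => by
    rw [← card_filter_orbitFinset_eq_one_iff, ← card_isExit_eq_card_isEntry (by simp),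
      card_filter_orbitFinset_eq_one_iff]
    exact hB x
  have h₁ : IsEntry π ℓ (π⁻¹ (τ u)) := by
    have hℓ : ℓ (π (π⁻¹ (τ u))) := by simpa [hτ] using hu.1
    refine ⟨fun h => hu.2 ?_, hℓ⟩
    have hw : π⁻¹ (τ u) = u := τ.injective (by rw [← hA _ (iff_of_true h hℓ)]; simp)
    exact hw ▸ hℓ
  have h₂ : IsEntry π ℓ (τ⁻¹ (π u)) := by
    have hℓ : ¬ ℓ (τ⁻¹ (π u)) := fun h => hu.2 (by simpa using (hτ _).2 h)
    refine ⟨hℓ, by_contra fun hn => hℓ ?_⟩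
    have hv : τ⁻¹ (π u) = u := π.injective (by rw [hA _ (iff_of_false hℓ hn)]; simp)
    rw [hv]
    exact hu.1
  refine (hentry (τ u)).unique ⟨⟨-1, by simp⟩, h₁⟩ ⟨hC, h₂⟩

theorem involutive_kreweras_iff_of_isExit [Fintype α] (hτ : ∀ x, ℓ (τ x) ↔ ℓ x)
    (hA : ∀ x, (ℓ x ↔ ℓ (π x)) → π x = τ x) (hB : ∀ x, ∃! u, π.SameCycle x u ∧ IsExit π ℓ u) :
    Function.Involutive ⇑(π⁻¹ * τ) ↔ ∀ u, IsExit π ℓ u → π.SameCycle (τ u) (τ⁻¹ (π u)) := by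
  rw [involutive_kreweras_iff]
  refine ⟨fun h u _ => h u ▸ ⟨-1, by simp⟩, fun hC x => ?_⟩
  by_cases hx : ℓ x ↔ ℓ (π x)
  · rw [inv_eq_iff_eq, hA x hx]
    simp [hA x hx]
  by_cases hℓ : ℓ x
  · have hu : IsExit π ℓ x := ⟨hℓ, fun h => hx (iff_of_true hℓ h)⟩
    exact inv_apply_eq_of_isExit hτ hA hB hu (hC x hu)
  -- `x` is an entry, and `τ⁻¹ (π x)` is the exit preceding it
  have hπx : ℓ (π x) := by tauto
  set d := τ⁻¹ (π x)
  have hτd : τ d = π x := by simp [d]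
  have hd : IsExit π ℓ d := by
    have hℓd : ℓ d := (hτ d).1 (hτd ▸ hπx)
    refine ⟨hℓd, fun h => hℓ ?_⟩
    have hdx : d = x := π.injective (by rw [hA d (iff_of_true hℓd h), hτd])
    exact hdx ▸ hℓd
  have key := inv_apply_eq_of_isExit hτ hA hB hd (hC d hd)
  rw [hτd, Perm.coe_inv, symm_apply_apply] at key
  rw [key]
  simp

theorem numOrbits_add_numOrbits_kreweras_eq_card_iff [Fintype α] (hτ : ∀ x, ℓ (τ x) ↔ ℓ x)
    (hπ : EveryCycleCrosses π ℓ) :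
    numOrbits π + numOrbits (π⁻¹ * τ) = Fintype.card α ↔
      (∀ x, (ℓ x ↔ ℓ (π x)) → π x = τ x) ∧ (∀ x, ∃! u, π.SameCycle x u ∧ IsExit π ℓ u) ∧
        ∀ u, IsExit π ℓ u → π.SameCycle (τ u) (τ⁻¹ (π u)) := by
  have hπ₂ := two_mul_numOrbits_le_card_ne hτ hπ
  have hσ₂ := two_mul_numOrbits_le (π⁻¹ * τ)
  have hD : #{x | (π⁻¹ * τ) x = x} + #{x | π x ≠ τ x} = Fintype.card α := by
    simp_rw [kreweras_apply_eq_self_iff]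
    exact card_filter_add_card_filter_not _
  have hsplit : numOrbits π + numOrbits (π⁻¹ * τ) = Fintype.card α ↔
      2 * numOrbits π = #{x | π x ≠ τ x} ∧
        2 * numOrbits (π⁻¹ * τ) = Fintype.card α + #{x | (π⁻¹ * τ) x = x} :=
    ⟨fun h => ⟨by omega, by omega⟩, fun h => by omega⟩
  rw [hsplit, two_mul_numOrbits_eq_card_ne_iff hτ hπ, two_mul_numOrbits_eq_iff, and_assoc]
  exact and_congr_right fun hA => and_congr_right fun hB =>
    involutive_kreweras_iff_of_isExit hτ hA hB

end Kreweras

section Annulus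

variable {p q : ℕ}

theorem tauPQ_castAdd (i : Fin p) :
    tauPQ p q (Fin.castAdd q i) = Fin.castAdd q (finRotate p i) := by
  simp [tauPQ, permCongr_apply]

theorem tauPQ_natAdd (j : Fin q) :
    tauPQ p q (Fin.natAdd p j) = Fin.natAdd p (finRotate q j) := by
  simp [tauPQ, permCongr_apply]

theorem tauPQ_lt_iff (x : Fin (p + q)) : (tauPQ p q x : ℕ) < p ↔ (x : ℕ) < p := by
  induction x using Fin.addCases with
  | left i => simp [tauPQ_castAdd]
  | right j => simp [tauPQ_natAdd]

theorem val_tauPQ_of_ne (x : Fin (p + q)) (hp : (x : ℕ) + 1 ≠ p) (hpq : (x : ℕ) + 1 ≠ p + q) :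
    (tauPQ p q x : ℕ) = x + 1 := by
  induction x using Fin.addCases with
  | left i =>
    obtain ⟨m, rfl⟩ : ∃ m, p = m + 1 := ⟨p - 1, by have := i.isLt; omega⟩
    rw [tauPQ_castAdd, Fin.val_castAdd, coe_finRotate_of_ne_last (by simpa [Fin.ext_iff] using hp)]
    simp
  | right j =>
    obtain ⟨m, rfl⟩ : ∃ m, q = m + 1 := ⟨q - 1, by have := j.isLt; omega⟩
    rw [tauPQ_natAdd, Fin.val_natAdd, coe_finRotate_of_ne_last]
    · simp
      omega
    · simp only [Fin.val_natAdd, ne_eq, Fin.ext_iff, Fin.val_last] at hpq ⊢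
      omega

theorem sameCycle_tauPQ_of_le {x y : Fin (p + q)} (hxy : x ≤ y)
    (hside : (x : ℕ) < p ↔ (y : ℕ) < p) : (tauPQ p q).SameCycle x y := by
  obtain ⟨x, hx⟩ := x
  obtain ⟨y, hy⟩ := y
  simp only [Fin.mk_le_mk] at hxy hside ⊢
  induction y, hxy using Nat.le_induction with
  | base => rfl
  | succ y hxy ih =>
    refine (ih (by omega) (by omega)).trans ⟨1, Fin.ext ?_⟩
    rw [zpow_one]
    exact val_tauPQ_of_ne _ (by simp; omega) (by simp; omega)

theorem sameCycle_tauPQ_iff {x y : Fin (p + q)} :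
    (tauPQ p q).SameCycle x y ↔ ((x : ℕ) < p ↔ (y : ℕ) < p) := by
  refine ⟨iff_of_sameCycle (ℓ := fun z : Fin (p + q) => (z : ℕ) < p) tauPQ_lt_iff, fun h => ?_⟩
  rcases le_total x y with hxy | hyx
  · exact sameCycle_tauPQ_of_le hxy h
  · exact (sameCycle_tauPQ_of_le hyx h.symm).symm

theorem numOrbits_tauPQ (hp : 1 ≤ p) (hq : 1 ≤ q) : numOrbits (tauPQ p q) = 2 := by
  have hker : orbitSetoid (tauPQ p q) = Setoid.ker fun x : Fin (p + q) => (x : ℕ) < p :=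
    Setoid.ext fun _ _ => sameCycle_tauPQ_iff.trans propext_iff.symm
  have hsurj : Function.Surjective fun x : Fin (p + q) => (x : ℕ) < p := by
    intro P
    by_cases hP : P
    · exact ⟨⟨0, by omega⟩, by simp [hP]; omega⟩
    · exact ⟨⟨p, by omega⟩, by simp [hP]⟩
  rw [numOrbits, hker, Nat.card_congr (Setoid.quotientKerEquivOfSurjective _ hsurj)]
  simp

theorem numJoin_tauPQ_eq_one (hp : 1 ≤ p) {π : Perm (Fin (p + q))}
    (hall : ∀ x, x ∈ BridgeSet p q π) : numJoin π (tauPQ p q) = 1 := by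
  let x₀ : Fin (p + q) := ⟨0, by omega⟩
  have hx₀ : ∀ x, (orbitSetoid π ⊔ orbitSetoid (tauPQ p q)) x x₀ := fun x => by
    obtain ⟨a, -, hxa, -, ha, -⟩ := hall x
    exact Setoid.trans' _ (Setoid.le_def.1 le_sup_left hxa)
      (Setoid.le_def.1 le_sup_right (sameCycle_tauPQ_iff.2 (iff_of_true ha hp)))
  rw [numJoin, Nat.card_eq_one_iff_unique]
  exact ⟨⟨fun c d => Quotient.inductionOn₂ c d fun x y =>
    Quotient.sound (Setoid.trans' _ (hx₀ x) (Setoid.symm' _ (hx₀ y)))⟩, ⟨Quotient.mk _ x₀⟩⟩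

theorem mem_SAnnNC_iff (hp : 1 ≤ p) (hq : 1 ≤ q) {π : Perm (Fin (p + q))}
    (hall : ∀ x, x ∈ BridgeSet p q π) :
    π ∈ SAnnNC p q ↔ numOrbits π + numOrbits (π⁻¹ * tauPQ p q) = p + q := by
  obtain ⟨a, b, hxa, hxb, ha, hb⟩ := hall ⟨0, by omega⟩
  have hbridge : ∃ a b : Fin (p + q), π.SameCycle a b ∧ (a : ℕ) < p ∧ p ≤ (b : ℕ) :=
    ⟨a, b, hxa.symm.trans hxb, ha, hb⟩
  simp only [SAnnNC, Set.mem_ofPred_eq, hbridge, and_true, IsNoncrossingOn, euler,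
    numOrbits_tauPQ hp hq, numJoin_tauPQ_eq_one hp hall, Nat.card_eq_fintype_card,
    Fintype.card_fin]
  omega

end Annulus

end AnnNC

open AnnNC in
/-- if every cycle of `π` is a bridge, then `π ∈ S_ann-nc(p,q)` iff
every cycle is of the form `(a, τ(a), …, τ^{r−1}(a), b, τ(b), …, τ^{s−1}(b))`
(i.e. steps staying on one side of the annulus are `τ`-steps and each cycle has exactly one
transition from `[p]` to `[p+1,p+q]`), and the bridges are encountered in mutually reverse
cyclic orders along the two cycles of `τ` (i.e. the next bridge along the first circle is
the previous bridge along the second circle). -/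
theorem stmt1 (p q : ℕ) (hp : 1 ≤ p) (hq : 1 ≤ q) (π : Equiv.Perm (Fin (p + q)))
    (hall : ∀ x : Fin (p + q), x ∈ BridgeSet p q π) :
    π ∈ SAnnNC p q ↔
      ((∀ c : Fin (p + q), (((c : ℕ) < p) ↔ ((π c : ℕ) < p)) → π c = tauPQ p q c) ∧
       (∀ x : Fin (p + q), ∃! u : Fin (p + q),
          π.SameCycle x u ∧ (u : ℕ) < p ∧ p ≤ ((π u : ℕ))) ∧
       (∀ u : Fin (p + q), (u : ℕ) < p → p ≤ ((π u : ℕ)) →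
          π.SameCycle (tauPQ p q u) ((tauPQ p q)⁻¹ (π u)))) := by
  have hπ : EveryCycleCrosses π fun x => (x : ℕ) < p := fun x => by
    obtain ⟨a, b, hxa, hxb, ha, hb⟩ := hall x
    exact ⟨a, b, hxa, hxb, ha, not_lt.2 hb⟩
  have key := numOrbits_add_numOrbits_kreweras_eq_card_iff tauPQ_lt_iff hπ
  rw [Fintype.card_fin] at key
  rw [mem_SAnnNC_iff hp hq hall, key]
  simp only [IsExit, not_lt, and_imp]
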